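/- Suppose a : ℝ² × ℝ² × ℝ² → ℂ is a symbol of order m (type (1,0)) in ξ, uniformly for (x,y) in compact sets, supported in {|ξ₂| ≤ M|ξ₁|} for each (x,y), and vanishing to order k at ξ₂ = 0 (all ξ₂-derivatives up to order k−1 vanish there). Fix an open set O ⊂ ℝ²×ℝ² with x₂ ≠ y₂ on O. Define a₁(x,y,ξ₁) = ∫₀^∞ e^{i(x₂−y₂)ξ₂} a(x,y,ξ₁,ξ₂) dξ₂. Then for every compact K ⊂ O and every integer l ≥ 0 there is C with |∂_{ξ₁}^l a₁(x,y,ξ₁)| ≤ C(1+|ξ₁|)^{m−k−l} for all (x,y) ∈ K and ξ₁ ∈ ℝ. -/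

import Mathlib

open Real MeasureTheory Set Filter intervalIntegral
open scoped Topology

noncomputable def pdu (f : ℝ × ℝ → ℂ) : ℝ × ℝ → ℂ := fun p => deriv (fun u => f (u, p.2)) p.1
noncomputable def pdv (f : ℝ × ℝ → ℂ) : ℝ × ℝ → ℂ := fun p => deriv (fun v => f (p.1, v)) p.2

lemma hasDerivAt_slice1 {f : ℝ × ℝ → ℂ} (hf : ContDiff ℝ (⊤:ℕ∞) f) (u v : ℝ) :
    HasDerivAt (fun u' => f (u', v)) (fderiv ℝ f (u, v) (1, 0)) u := by
  have h : HasDerivAt (fun u' : ℝ => (u', v)) ((1:ℝ), (0:ℝ)) u :=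
    (hasDerivAt_id u).prodMk (hasDerivAt_const u v)
  exact ((hf.differentiable (by norm_cast) (u, v)).hasFDerivAt).comp_hasDerivAt u h

lemma hasDerivAt_slice2 {f : ℝ × ℝ → ℂ} (hf : ContDiff ℝ (⊤:ℕ∞) f) (u v : ℝ) :
    HasDerivAt (fun v' => f (u, v')) (fderiv ℝ f (u, v) (0, 1)) v := by
  have h : HasDerivAt (fun v' : ℝ => (u, v')) ((0:ℝ), (1:ℝ)) v :=
    (hasDerivAt_const v u).prodMk (hasDerivAt_id v)
  exact ((hf.differentiable (by norm_cast) (u, v)).hasFDerivAt).comp_hasDerivAt v h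

lemma pdu_eq {f : ℝ × ℝ → ℂ} (hf : ContDiff ℝ (⊤:ℕ∞) f) (p : ℝ × ℝ) :
    pdu f p = fderiv ℝ f p (1, 0) := (hasDerivAt_slice1 hf p.1 p.2).deriv

lemma pdv_eq {f : ℝ × ℝ → ℂ} (hf : ContDiff ℝ (⊤:ℕ∞) f) (p : ℝ × ℝ) :
    pdv f p = fderiv ℝ f p (0, 1) := (hasDerivAt_slice2 hf p.1 p.2).deriv

lemma hasDerivAt_pdu {f : ℝ × ℝ → ℂ} (hf : ContDiff ℝ (⊤:ℕ∞) f) (u v : ℝ) :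
    HasDerivAt (fun u' => f (u', v)) (pdu f (u, v)) u := by
  rw [pdu_eq hf]; exact hasDerivAt_slice1 hf u v

lemma hasDerivAt_pdv {f : ℝ × ℝ → ℂ} (hf : ContDiff ℝ (⊤:ℕ∞) f) (u v : ℝ) :
    HasDerivAt (fun v' => f (u, v')) (pdv f (u, v)) v := by
  rw [pdv_eq hf]; exact hasDerivAt_slice2 hf u v

lemma contDiff_pdu {f : ℝ × ℝ → ℂ} (hf : ContDiff ℝ (⊤:ℕ∞) f) : ContDiff ℝ (⊤:ℕ∞) (pdu f) := by
  have : pdu f = fun p => fderiv ℝ f p (1, 0) := funext fun p => pdu_eq hf p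
  rw [this]
  exact (hf.fderiv_right (by norm_cast)).clm_apply contDiff_const

lemma contDiff_pdv {f : ℝ × ℝ → ℂ} (hf : ContDiff ℝ (⊤:ℕ∞) f) : ContDiff ℝ (⊤:ℕ∞) (pdv f) := by
  have : pdv f = fun p => fderiv ℝ f p (0, 1) := funext fun p => pdv_eq hf p
  rw [this]
  exact (hf.fderiv_right (by norm_cast)).clm_apply contDiff_const

lemma pdu_pdv_comm {f : ℝ × ℝ → ℂ} (hf : ContDiff ℝ (⊤:ℕ∞) f) :
    pdu (pdv f) = pdv (pdu f) := by
  funext p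
  have hsymm : IsSymmSndFDerivAt ℝ f p := by
    apply hf.contDiffAt.isSymmSndFDerivAt
    rw [minSmoothness_of_isRCLikeNormedField]; exact WithTop.coe_le_coe.mpr le_top
  have hfd : ContDiff ℝ (⊤:ℕ∞) (fderiv ℝ f) := hf.fderiv_right (by norm_cast)
  have key : ∀ w : ℝ × ℝ, fderiv ℝ (fun q => fderiv ℝ f q w) p
      = (fderiv ℝ (fderiv ℝ f) p).flip w := by
    intro w
    rw [fderiv_clm_apply (hfd.differentiable (by norm_cast) p) (differentiableAt_const w)]
    simp
  have h1 : pdu (pdv f) p = fderiv ℝ (fderiv ℝ f) p (1, 0) (0, 1) := by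
    rw [pdu_eq (contDiff_pdv hf)]
    have : pdv f = fun q => fderiv ℝ f q (0, 1) := funext fun q => pdv_eq hf q
    rw [this, key (0,1)]
    rfl
  have h2 : pdv (pdu f) p = fderiv ℝ (fderiv ℝ f) p (0, 1) (1, 0) := by
    rw [pdv_eq (contDiff_pdu hf)]
    have : pdu f = fun q => fderiv ℝ f q (1, 0) := funext fun q => pdu_eq hf q
    rw [this, key (1,0)]
    rfl
  rw [h1, h2, hsymm (1,0) (0,1)]

lemma contDiff_pdu_iter {f : ℝ × ℝ → ℂ} (hf : ContDiff ℝ (⊤:ℕ∞) f) (n : ℕ) :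
    ContDiff ℝ (⊤:ℕ∞) (pdu^[n] f) := by
  induction n with
  | zero => exact hf
  | succ n ih => rw [Function.iterate_succ_apply']; exact contDiff_pdu ih

lemma contDiff_pdv_iter {f : ℝ × ℝ → ℂ} (hf : ContDiff ℝ (⊤:ℕ∞) f) (n : ℕ) :
    ContDiff ℝ (⊤:ℕ∞) (pdv^[n] f) := by
  induction n with
  | zero => exact hf
  | succ n ih => rw [Function.iterate_succ_apply']; exact contDiff_pdv ih

lemma pdu_pdv_iter_comm {f : ℝ × ℝ → ℂ} (hf : ContDiff ℝ (⊤:ℕ∞) f) (q : ℕ) :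
    pdu (pdv^[q] f) = pdv^[q] (pdu f) := by
  induction q generalizing f with
  | zero => rfl
  | succ q ih =>
      rw [Function.iterate_succ_apply', pdu_pdv_comm (contDiff_pdv_iter hf q), ih hf]
      exact (Function.iterate_succ_apply' pdv q (pdu f)).symm

lemma pdu_iter_pdv_iter_comm {f : ℝ × ℝ → ℂ} (hf : ContDiff ℝ (⊤:ℕ∞) f) (p q : ℕ) :
    pdu^[p] (pdv^[q] f) = pdv^[q] (pdu^[p] f) := by
  induction p generalizing f with
  | zero => rfl
  | succ p ih =>
      rw [Function.iterate_succ_apply, pdu_pdv_iter_comm hf q, ih (contDiff_pdu hf),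
        ← Function.iterate_succ_apply]

lemma iteratedDeriv_slice1 {f : ℝ × ℝ → ℂ} (hf : ContDiff ℝ (⊤:ℕ∞) f) (n : ℕ) (v : ℝ) :
    iteratedDeriv n (fun u => f (u, v)) = fun x => pdu^[n] f (x, v) := by
  induction n with
  | zero => simp [iteratedDeriv_zero]
  | succ n ih =>
      funext x
      rw [iteratedDeriv_succ, ih, Function.iterate_succ_apply']
      exact (hasDerivAt_pdu (contDiff_pdu_iter hf n) x v).deriv

lemma iteratedDeriv_slice2 {f : ℝ × ℝ → ℂ} (hf : ContDiff ℝ (⊤:ℕ∞) f) (n : ℕ) (u : ℝ) :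
    iteratedDeriv n (fun v => f (u, v)) = fun y => pdv^[n] f (u, y) := by
  induction n with
  | zero => simp [iteratedDeriv_zero]
  | succ n ih =>
      funext y
      rw [iteratedDeriv_succ, ih, Function.iterate_succ_apply']
      exact (hasDerivAt_pdv (contDiff_pdv_iter hf n) u y).deriv

lemma pdu_zero_on {U : Set (ℝ × ℝ)} (hU : IsOpen U) {f : ℝ × ℝ → ℂ}
    (h : ∀ p ∈ U, f p = 0) : ∀ p ∈ U, pdu f p = 0 := by
  intro p hp
  have hev : (fun u => f (u, p.2)) =ᶠ[nhds p.1] fun _ => (0:ℂ) := by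
    have : IsOpen {u : ℝ | (u, p.2) ∈ U} := hU.preimage (by fun_prop)
    filter_upwards [this.mem_nhds hp] with u hu using h _ hu
  show deriv _ _ = 0
  rw [hev.deriv_eq, deriv_const]

lemma pdv_zero_on {U : Set (ℝ × ℝ)} (hU : IsOpen U) {f : ℝ × ℝ → ℂ}
    (h : ∀ p ∈ U, f p = 0) : ∀ p ∈ U, pdv f p = 0 := by
  intro p hp
  have hev : (fun v => f (p.1, v)) =ᶠ[nhds p.2] fun _ => (0:ℂ) := by
    have : IsOpen {v : ℝ | (p.1, v) ∈ U} := hU.preimage (by fun_prop)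
    filter_upwards [this.mem_nhds hp] with v hv using h _ hv
  show deriv _ _ = 0
  rw [hev.deriv_eq, deriv_const]

lemma pdu_iter_zero_on {U : Set (ℝ × ℝ)} (hU : IsOpen U) {f : ℝ × ℝ → ℂ}
    (h : ∀ p ∈ U, f p = 0) (n : ℕ) : ∀ p ∈ U, pdu^[n] f p = 0 := by
  induction n with
  | zero => exact h
  | succ n ih =>
      intro p hp
      rw [Function.iterate_succ_apply']
      exact pdu_zero_on hU ih p hp

lemma pdv_iter_zero_on {U : Set (ℝ × ℝ)} (hU : IsOpen U) {f : ℝ × ℝ → ℂ}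
    (h : ∀ p ∈ U, f p = 0) (n : ℕ) : ∀ p ∈ U, pdv^[n] f p = 0 := by
  induction n with
  | zero => exact h
  | succ n ih =>
      intro p hp
      rw [Function.iterate_succ_apply']
      exact pdv_zero_on hU ih p hp

lemma iteratedDeriv_zero_of_support {b : ℝ → ℂ} {R : ℝ} (h : ∀ v, R < v → b v = 0) (j : ℕ) :
    ∀ v, R < v → iteratedDeriv j b v = 0 := by
  induction j with
  | zero => simpa using h
  | succ j ih =>
      intro v hv
      rw [iteratedDeriv_succ]
      have hev : iteratedDeriv j b =ᶠ[nhds v] fun _ => (0:ℂ) := by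
        filter_upwards [isOpen_Ioi.mem_nhds hv] with w hw using ih w hw
      rw [hev.deriv_eq, deriv_const]

lemma integrableOn_of_support {g : ℝ → ℂ} (hg : Continuous g) {R : ℝ} (hR0 : 0 < R)
    (h : ∀ v, R < v → g v = 0) : IntegrableOn g (Ioi (0:ℝ)) := by
  have : Ioi (0:ℝ) = Ioc 0 R ∪ Ioi R := (Set.Ioc_union_Ioi_eq_Ioi hR0.le).symm
  rw [this]
  refine (hg.integrableOn_Ioc).union ?_
  exact (integrableOn_zero (ε' := ℂ)).congr_fun (fun v hv => (h v hv).symm) measurableSet_Ioi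

lemma ibp_step {t : ℝ} (ht : t ≠ 0) {b : ℝ → ℂ} (hb : ContDiff ℝ (⊤:ℕ∞) b) {R : ℝ}
    (hR0 : 0 < R) (hR : ∀ v, R < v → b v = 0) :
    ∫ v in Ioi (0:ℝ), Complex.exp (Complex.I * (t:ℂ) * (v:ℂ)) * b v
      = (Complex.I * t)⁻¹ *
        (-(b 0) - ∫ v in Ioi (0:ℝ), Complex.exp (Complex.I * (t:ℂ) * (v:ℂ)) * deriv b v) := by
  set c : ℂ := Complex.I * t with hc
  have hcne : c ≠ 0 := by
    simp [hc, Complex.ext_iff, Complex.I_mul_re, ht]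
  have hexp : ∀ v : ℝ, HasDerivAt (fun v : ℝ => Complex.exp (c * v)) (Complex.exp (c * v) * c) v := by
    intro v
    have h1 : HasDerivAt (fun v : ℝ => c * (v:ℂ)) c v := by
      simpa using (Complex.ofRealCLM.hasDerivAt (x := v)).const_mul c
    exact h1.cexp
  set F : ℝ → ℂ := fun v => c⁻¹ * (Complex.exp (c * v) * b v) with hF
  have hb' : ∀ v : ℝ, HasDerivAt b (deriv b v) v :=
    fun v => ((hb.differentiable (by norm_cast)) v).hasDerivAt
  have hFd : ∀ v : ℝ, HasDerivAt F
      (Complex.exp (c * v) * b v + c⁻¹ * (Complex.exp (c * v) * deriv b v)) v := by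
    intro v
    have := ((hexp v).mul (hb' v)).const_mul c⁻¹
    exact this.congr_deriv (by linear_combination (Complex.exp (c * v) * b v) * inv_mul_cancel₀ hcne)
  have hderivb_supp : ∀ v, R < v → deriv b v = 0 := by
    have := iteratedDeriv_zero_of_support hR 1
    simpa [iteratedDeriv_succ, iteratedDeriv_zero] using this
  have hcont_b : Continuous b := hb.continuous
  have hcont_db : Continuous (deriv b) := (hb.iterate_deriv 1).continuous
  have hint1 : IntegrableOn (fun v : ℝ => Complex.exp (c * v) * b v) (Ioi (0:ℝ)) := by
    apply integrableOn_of_support (by continuity) hR0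
    intro v hv; simp [hR v hv]
  have hint2 : IntegrableOn (fun v : ℝ => Complex.exp (c * v) * deriv b v) (Ioi (0:ℝ)) := by
    apply integrableOn_of_support (by continuity) hR0
    intro v hv; simp [hderivb_supp v hv]
  have hint3 : IntegrableOn (fun v : ℝ =>
      Complex.exp (c * v) * b v + c⁻¹ * (Complex.exp (c * v) * deriv b v)) (Ioi (0:ℝ)) :=
    hint1.add (hint2.const_mul _)
  have htend : Tendsto F atTop (nhds 0) := by
    apply Tendsto.congr' _ tendsto_const_nhds
    filter_upwards [eventually_gt_atTop R] with v hv
    simp [hF, hR v hv]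
  have key : ∫ v in Ioi (0:ℝ),
      (Complex.exp (c * v) * b v + c⁻¹ * (Complex.exp (c * v) * deriv b v)) = 0 - F 0 :=
    integral_Ioi_of_hasDerivAt_of_tendsto (hcont := (hFd 0).continuousAt.continuousWithinAt)
      (fun x _ => hFd x) hint3 htend
  rw [MeasureTheory.integral_add hint1 (hint2.const_mul _)] at key
  rw [MeasureTheory.integral_const_mul] at key
  have : ∫ v in Ioi (0:ℝ), Complex.exp (c * v) * b v
      = -F 0 - c⁻¹ * ∫ v in Ioi (0:ℝ), Complex.exp (c * v) * deriv b v := by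
    rw [eq_sub_iff_add_eq, key]
    simp
  rw [this]
  simp only [hF]
  rw [Complex.ofReal_zero, mul_zero, Complex.exp_zero, one_mul, mul_sub, mul_neg]

lemma contDiff_iteratedDeriv {b : ℝ → ℂ} (hb : ContDiff ℝ (⊤:ℕ∞) b) (p : ℕ) :
    ContDiff ℝ (⊤:ℕ∞) (iteratedDeriv p b) := by
  rw [iteratedDeriv_eq_iterate]
  exact hb.iterate_deriv p

lemma ibp_bound {t : ℝ} (ht : t ≠ 0) {b : ℝ → ℂ} (hb : ContDiff ℝ (⊤:ℕ∞) b) {R : ℝ}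
    (hR0 : 0 < R) (hR : ∀ v, R < v → b v = 0) (p : ℕ) :
    ‖∫ v in Ioi (0:ℝ), Complex.exp (Complex.I * (t:ℂ) * (v:ℂ)) * b v‖
      ≤ (∑ j ∈ Finset.range p, |t|⁻¹ ^ (j+1) * ‖iteratedDeriv j b 0‖)
        + |t|⁻¹ ^ p * ‖∫ v in Ioi (0:ℝ),
            Complex.exp (Complex.I * (t:ℂ) * (v:ℂ)) * iteratedDeriv p b v‖ := by
  induction p with
  | zero => simp
  | succ p ih =>
      have hbp : ContDiff ℝ (⊤:ℕ∞) (iteratedDeriv p b) := contDiff_iteratedDeriv hb p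
      have hsupp : ∀ v, R < v → iteratedDeriv p b v = 0 := iteratedDeriv_zero_of_support hR p
      have hstep := ibp_step ht hbp hR0 hsupp
      have hderiv_eq : deriv (iteratedDeriv p b) = iteratedDeriv (p+1) b :=
        (funext fun x => (iteratedDeriv_succ (n := p) (f := b)) ▸ rfl)
      rw [hderiv_eq] at hstep
      have hnorm : ‖(Complex.I * (t:ℂ))⁻¹‖ = |t|⁻¹ := by
        rw [norm_inv]; simp
      have hbnd : ‖∫ v in Ioi (0:ℝ),
          Complex.exp (Complex.I * (t:ℂ) * (v:ℂ)) * iteratedDeriv p b v‖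
          ≤ |t|⁻¹ * ‖iteratedDeriv p b 0‖ + |t|⁻¹ * ‖∫ v in Ioi (0:ℝ),
              Complex.exp (Complex.I * (t:ℂ) * (v:ℂ)) * iteratedDeriv (p+1) b v‖ := by
        rw [hstep, norm_mul, hnorm, ← mul_add]
        gcongr
        calc ‖-(iteratedDeriv p b 0) - ∫ v in Ioi (0:ℝ),
              Complex.exp (Complex.I * (t:ℂ) * (v:ℂ)) * iteratedDeriv (p+1) b v‖
            ≤ ‖-(iteratedDeriv p b 0)‖ + ‖∫ v in Ioi (0:ℝ),
              Complex.exp (Complex.I * (t:ℂ) * (v:ℂ)) * iteratedDeriv (p+1) b v‖ :=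
              norm_sub_le _ _
          _ = _ := by rw [norm_neg]
      calc ‖∫ v in Ioi (0:ℝ), Complex.exp (Complex.I * (t:ℂ) * (v:ℂ)) * b v‖
          ≤ (∑ j ∈ Finset.range p, |t|⁻¹ ^ (j+1) * ‖iteratedDeriv j b 0‖)
            + |t|⁻¹ ^ p * ‖∫ v in Ioi (0:ℝ),
                Complex.exp (Complex.I * (t:ℂ) * (v:ℂ)) * iteratedDeriv p b v‖ := ih
        _ ≤ (∑ j ∈ Finset.range p, |t|⁻¹ ^ (j+1) * ‖iteratedDeriv j b 0‖)
            + |t|⁻¹ ^ p * (|t|⁻¹ * ‖iteratedDeriv p b 0‖ + |t|⁻¹ * ‖∫ v in Ioi (0:ℝ),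
                Complex.exp (Complex.I * (t:ℂ) * (v:ℂ)) * iteratedDeriv (p+1) b v‖) := by
              gcongr
        _ = (∑ j ∈ Finset.range (p+1), |t|⁻¹ ^ (j+1) * ‖iteratedDeriv j b 0‖)
            + |t|⁻¹ ^ (p+1) * ‖∫ v in Ioi (0:ℝ),
                Complex.exp (Complex.I * (t:ℂ) * (v:ℂ)) * iteratedDeriv (p+1) b v‖ := by
              rw [Finset.sum_range_succ]
              ring

lemma norm_exp_I_mul (t v : ℝ) : ‖Complex.exp (Complex.I * (t:ℂ) * (v:ℂ))‖ = 1 := by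
  rw [Complex.norm_exp]
  simp [Complex.mul_re]

lemma cone_open (Mz : ℝ) : IsOpen {p : ℝ × ℝ | Mz * |p.1| < |p.2|} :=
  isOpen_lt (by fun_prop) (by fun_prop)

lemma hasDerivAt_param {f : ℝ × ℝ → ℂ} (hf : ContDiff ℝ (⊤:ℕ∞) f) (t : ℝ) {Mz : ℝ}
    (hMz : 0 < Mz) (hsupp : ∀ p : ℝ × ℝ, Mz * |p.1| < |p.2| → f p = 0) (n : ℕ) (u₀ : ℝ) :
    HasDerivAt (fun u => ∫ v in Ioi (0:ℝ),
        Complex.exp (Complex.I * (t:ℂ) * (v:ℂ)) * pdu^[n] f (u, v))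
      (∫ v in Ioi (0:ℝ),
        Complex.exp (Complex.I * (t:ℂ) * (v:ℂ)) * pdu^[n+1] f (u₀, v)) u₀ := by
  have hsupp_n : ∀ j : ℕ, ∀ p : ℝ × ℝ, Mz * |p.1| < |p.2| → pdu^[j] f p = 0 :=
    fun j p hp => pdu_iter_zero_on (cone_open Mz) hsupp j p hp
  set R : ℝ := Mz * (|u₀| + 1) + 1 with hRdef
  have hR0 : 0 < R := by positivity
  have hcont : ∀ j : ℕ, Continuous (pdu^[j] f) := fun j => (contDiff_pdu_iter hf j).continuous
  -- bound on the compact rectangle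
  obtain ⟨B, hB⟩ : ∃ B, ∀ p ∈ Icc (u₀ - 1) (u₀ + 1) ×ˢ Icc (0:ℝ) R, ‖pdu^[n+1] f p‖ ≤ B :=
    (IsCompact.exists_bound_of_continuousOn (isCompact_Icc.prod isCompact_Icc)
      (hcont (n+1)).continuousOn)
  have hB0 : 0 ≤ B := le_trans (norm_nonneg _)
    (hB (u₀, 0) ⟨⟨by linarith, by linarith⟩, le_refl (0:ℝ), hR0.le⟩)
  have key := _root_.hasDerivAt_integral_of_dominated_loc_of_deriv_le (μ := volume.restrict (Ioi 0))
    (F := fun u v => Complex.exp (Complex.I * (t:ℂ) * (v:ℂ)) * pdu^[n] f (u, v))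
    (F' := fun u v => Complex.exp (Complex.I * (t:ℂ) * (v:ℂ)) * pdu^[n+1] f (u, v))
    (x₀ := u₀) (s := Metric.ball u₀ 1) (bound := Set.indicator (Icc (0:ℝ) R) (fun _ => B)) (Metric.ball_mem_nhds u₀ one_pos)
    ?_ ?_ ?_ ?_ ?_ ?_
  · exact key.2
  · filter_upwards with u
    exact Continuous.aestronglyMeasurable (by fun_prop)
  · apply integrableOn_of_support (by fun_prop) hR0
    intro v hv
    have : pdu^[n] f (u₀, v) = 0 := by
      apply hsupp_n n (u₀, v)
      have : Mz * |u₀| < R := by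
        rw [hRdef]; nlinarith [abs_nonneg u₀]
      simp only
      rw [abs_of_pos (lt_trans hR0 hv)]
      linarith
    simp [this]
  · exact Continuous.aestronglyMeasurable (by fun_prop)
  · rw [ae_restrict_iff' measurableSet_Ioi]
    filter_upwards with v hv
    intro u hu
    rw [norm_mul, norm_exp_I_mul, one_mul]
    rcases le_or_gt v R with hvR | hvR
    · rw [Set.indicator_of_mem (Set.mem_Icc.mpr ⟨le_of_lt hv, hvR⟩)]
      apply hB
      rw [Metric.mem_ball, Real.dist_eq] at hu
      have h1 := abs_le.mp (le_of_lt hu)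
      exact ⟨⟨by linarith [h1.1], by linarith [h1.2]⟩, le_of_lt hv, hvR⟩
    · rw [Set.indicator_of_notMem (fun h => absurd h.2 (not_le.mpr hvR))]
      have : pdu^[n+1] f (u, v) = 0 := by
        apply hsupp_n (n+1) (u, v)
        simp only
        rw [Metric.mem_ball, Real.dist_eq] at hu
        have h1 : |u| ≤ |u₀| + 1 := by
          calc |u| = |u₀ + (u - u₀)| := by ring_nf
            _ ≤ |u₀| + |u - u₀| := abs_add_le _ _
            _ ≤ |u₀| + 1 := by linarith [le_of_lt hu]
        have h2 : Mz * |u| ≤ Mz * (|u₀| + 1) := by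
          exact mul_le_mul_of_nonneg_left h1 (le_of_lt hMz)
        rw [abs_of_pos (lt_trans hR0 hvR)]
        calc Mz * |u| ≤ Mz * (|u₀| + 1) := h2
          _ < R := by rw [hRdef]; linarith
          _ < v := hvR
      rw [this, norm_zero]
  · apply Integrable.restrict
    exact (integrableOn_const measure_Icc_lt_top.ne).integrable_indicator
      measurableSet_Icc
  · filter_upwards with v
    intro u _
    have h1 : HasDerivAt (fun u' => pdu^[n] f (u', v)) (pdu (pdu^[n] f) (u, v)) u :=
      hasDerivAt_pdu (contDiff_pdu_iter hf n) u v
    have := h1.const_mul (Complex.exp (Complex.I * (t:ℂ) * (v:ℂ)))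
    rw [← Function.iterate_succ_apply' pdu n f] at this
    exact this

lemma iteratedDeriv_param {f : ℝ × ℝ → ℂ} (hf : ContDiff ℝ (⊤:ℕ∞) f) (t : ℝ) {Mz : ℝ}
    (hMz : 0 < Mz) (hsupp : ∀ p : ℝ × ℝ, Mz * |p.1| < |p.2| → f p = 0) (l : ℕ) (ξ₁ : ℝ) :
    iteratedDeriv l (fun u => ∫ v in Ioi (0:ℝ),
        Complex.exp (Complex.I * (t:ℂ) * (v:ℂ)) * f (u, v)) ξ₁
      = ∫ v in Ioi (0:ℝ), Complex.exp (Complex.I * (t:ℂ) * (v:ℂ)) * pdu^[l] f (ξ₁, v) := by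
  induction l generalizing ξ₁ with
  | zero => simp
  | succ l ih =>
      rw [iteratedDeriv_succ]
      have hfe : iteratedDeriv l (fun u => ∫ v in Ioi (0:ℝ),
          Complex.exp (Complex.I * (t:ℂ) * (v:ℂ)) * f (u, v))
          = fun u => ∫ v in Ioi (0:ℝ),
              Complex.exp (Complex.I * (t:ℂ) * (v:ℂ)) * pdu^[l] f (u, v) :=
        funext fun u => ih u
      rw [hfe]
      exact (hasDerivAt_param hf t hMz hsupp l ξ₁).deriv

lemma integral_Ioc_inv_sq_le (R : ℝ) (hR : 0 ≤ R) :
    ∫ v in Ioc (0:ℝ) R, ((1+v)^2)⁻¹ ≤ 1 := by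
  have hderiv : ∀ v ∈ uIcc (0:ℝ) R, HasDerivAt (fun v => -(1+v)⁻¹) (((1+v)^2)⁻¹) v := by
    intro v hv
    rw [uIcc_of_le hR, mem_Icc] at hv
    have hne : (1+v) ≠ 0 := by linarith
    have h : HasDerivAt (fun v : ℝ => 1+v) 1 v := (hasDerivAt_id v).const_add 1
    have := (h.inv hne).neg
    exact this.congr_deriv (by ring)
  have hcont : IntervalIntegrable (fun v : ℝ => ((1+v)^2)⁻¹) volume 0 R := by
    apply ContinuousOn.intervalIntegrable
    apply ContinuousOn.inv₀ (by fun_prop)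
    intro v hv
    rw [uIcc_of_le hR, mem_Icc] at hv
    have : (0:ℝ) < 1 + v := by linarith [hv.1]
    positivity
  have := intervalIntegral.integral_eq_sub_of_hasDerivAt hderiv hcont
  rw [intervalIntegral.integral_of_le hR] at this
  rw [this]
  have h1 : (0:ℝ) ≤ (1+R)⁻¹ := by positivity
  simp only [add_zero, inv_one]
  linarith

lemma weight_le (ξ₁ v : ℝ) (hv : 0 ≤ v) (μ α : ℝ) (hμα : μ - α ≤ 0)
    (h2 : max α 0 + (μ - α) ≤ -2) :
    (1 + Real.sqrt (ξ₁^2 + v^2)) ^ μ ≤ (1+|ξ₁|)^α * ((1+v)^2)⁻¹ := by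
  set s := 1 + Real.sqrt (ξ₁^2 + v^2) with hs
  have hsq : (0:ℝ) ≤ Real.sqrt (ξ₁^2 + v^2) := Real.sqrt_nonneg _
  have hs1 : (1:ℝ) ≤ s := by linarith
  have hs0 : (0:ℝ) < s := by linarith
  have hξ : 1 + |ξ₁| ≤ s := by
    have : |ξ₁| ≤ Real.sqrt (ξ₁^2 + v^2) := by
      rw [← Real.sqrt_sq_eq_abs]
      exact Real.sqrt_le_sqrt (by nlinarith)
    linarith
  have hξ0 : (0:ℝ) < 1 + |ξ₁| := by positivity
  have hv' : 1 + v ≤ s := by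
    have : v ≤ Real.sqrt (ξ₁^2 + v^2) := by
      nlinarith [Real.sq_sqrt (show (0:ℝ) ≤ ξ₁^2+v^2 by positivity),
        Real.sqrt_nonneg (ξ₁^2+v^2), sq_nonneg (Real.sqrt (ξ₁^2+v^2) - v)]
    linarith
  have hv0 : (0:ℝ) < 1 + v := by linarith
  have hprod : s ≤ (1 + |ξ₁|) * (1 + v) := by
    have h1 : Real.sqrt (ξ₁^2 + v^2) ≤ |ξ₁| + v := by
      rw [show |ξ₁| + v = Real.sqrt ((|ξ₁| + v)^2) from
        (Real.sqrt_sq (by positivity)).symm]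
      apply Real.sqrt_le_sqrt
      have := abs_nonneg ξ₁
      nlinarith [sq_abs ξ₁]
    have := abs_nonneg ξ₁
    nlinarith
  have key1 : s ^ α ≤ (1+|ξ₁|)^α * (1+v)^(max α 0) := by
    rcases le_or_gt α 0 with hα | hα
    · have h1 : s ^ α ≤ (1+|ξ₁|)^α := Real.rpow_le_rpow_of_nonpos hξ0 hξ hα
      have h2' : (1:ℝ) ≤ (1+v)^(max α 0) :=
        Real.one_le_rpow (by linarith) (le_max_right _ _)
      calc s ^ α ≤ (1+|ξ₁|)^α := h1
        _ = (1+|ξ₁|)^α * 1 := (mul_one _).symm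
        _ ≤ (1+|ξ₁|)^α * (1+v)^(max α 0) := by
            apply mul_le_mul_of_nonneg_left h2' (Real.rpow_nonneg hξ0.le _)
    · have h1 : s ^ α ≤ ((1+|ξ₁|) * (1+v)) ^ α :=
        Real.rpow_le_rpow hs0.le hprod hα.le
      rw [Real.mul_rpow hξ0.le hv0.le] at h1
      rw [max_eq_left hα.le]
      exact h1
  have key2 : s ^ (μ - α) ≤ (1+v)^(μ - α) :=
    Real.rpow_le_rpow_of_nonpos hv0 hv' hμα
  have key3 : (1+v)^(max α 0) * (1+v)^(μ - α) ≤ ((1+v)^2)⁻¹ := by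
    rw [← Real.rpow_add hv0]
    have : (1+v) ^ (max α 0 + (μ - α)) ≤ (1+v) ^ (-2 : ℝ) :=
      Real.rpow_le_rpow_of_exponent_le (by linarith) h2
    calc (1+v) ^ (max α 0 + (μ - α)) ≤ (1+v) ^ (-2 : ℝ) := this
      _ = ((1+v)^2)⁻¹ := by
          rw [Real.rpow_neg hv0.le, ← Real.rpow_natCast (1+v) 2]
          norm_num
  calc s ^ μ = s ^ α * s ^ (μ - α) := by rw [← Real.rpow_add hs0]; ring_nf
    _ ≤ ((1+|ξ₁|)^α * (1+v)^(max α 0)) * (1+v)^(μ - α) := by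
        apply mul_le_mul key1 key2 (Real.rpow_nonneg hs0.le _)
        positivity
    _ = (1+|ξ₁|)^α * ((1+v)^(max α 0) * (1+v)^(μ - α)) := by ring
    _ ≤ (1+|ξ₁|)^α * ((1+v)^2)⁻¹ := by
        apply mul_le_mul_of_nonneg_left key3 (Real.rpow_nonneg hξ0.le _)

lemma iteratedDeriv_zero_fun (n : ℕ) : iteratedDeriv n (fun _ : ℝ => (0:ℂ)) = fun _ => 0 := by
  induction n with
  | zero => simp
  | succ n ih => rw [iteratedDeriv_succ, ih]; simp

/-- Proposition 2.1(b), quantitative form: off the diagonal, the partial Fourier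
integral `a₁(x,y,ξ₁) = ∫₀^∞ e^{i(x₂−y₂)ξ₂} a(x,y,ξ₁,ξ₂) dξ₂` of a cone-supported
order-`m` amplitude vanishing to order `k` at the edge is a one-dimensional
symbol of order `m − k`. -/
theorem stmt16 (m : ℝ) (k : ℕ) (a : (ℝ × ℝ) → (ℝ × ℝ) → (ℝ × ℝ) → ℂ)
    (hsm : ∀ x y : ℝ × ℝ, ContDiff ℝ (⊤ : ℕ∞) (a x y))
    (hsym : ∀ (p q : ℕ) (K : Set ((ℝ × ℝ) × (ℝ × ℝ))), IsCompact K →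
      ∃ C : ℝ, ∀ z ∈ K, ∀ ξ : ℝ × ℝ,
        ‖iteratedDeriv q (fun v : ℝ => iteratedDeriv p
            (fun u : ℝ => a z.1 z.2 (u, v)) ξ.1) ξ.2‖
          ≤ C * (1 + Real.sqrt (ξ.1 ^ 2 + ξ.2 ^ 2)) ^ (m - (p : ℝ) - (q : ℝ)))
    (M : (ℝ × ℝ) → (ℝ × ℝ) → ℝ) (hM : ∀ x y : ℝ × ℝ, 0 < M x y)
    (hsupp : ∀ x y : ℝ × ℝ, ∀ ξ : ℝ × ℝ, M x y * |ξ.1| < |ξ.2| → a x y ξ = 0)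
    (hvan : ∀ x y : ℝ × ℝ, ∀ ξ₁ : ℝ, ∀ j < k,
      iteratedDeriv j (fun v : ℝ => a x y (ξ₁, v)) 0 = 0)
    (O : Set ((ℝ × ℝ) × (ℝ × ℝ))) (hO : IsOpen O)
    (hO2 : ∀ z ∈ O, z.1.2 ≠ z.2.2) :
    ∀ K : Set ((ℝ × ℝ) × (ℝ × ℝ)), K ⊆ O → IsCompact K → ∀ l : ℕ,
      ∃ C : ℝ, ∀ z ∈ K, ∀ ξ₁ : ℝ,
        ‖iteratedDeriv l (fun u : ℝ => ∫ ξ₂ in Set.Ioi (0 : ℝ),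
            Complex.exp (Complex.I * ((z.1.2 - z.2.2 : ℝ) : ℂ) * (ξ₂ : ℂ)) *
              a z.1 z.2 (u, ξ₂)) ξ₁‖
          ≤ C * (1 + |ξ₁|) ^ (m - (k : ℝ) - (l : ℝ)) := by
  intro K hKO hK l
  rcases K.eq_empty_or_nonempty with rfl | hne
  · exact ⟨0, by simp⟩
  -- lower bound for |x₂ - y₂| on K
  obtain ⟨z₀, hz₀K, hz₀min⟩ := hK.exists_isMinOn hne
    (Continuous.continuousOn (f := fun z : (ℝ × ℝ) × (ℝ × ℝ) => |z.1.2 - z.2.2|)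
      (by fun_prop))
  set δ : ℝ := |z₀.1.2 - z₀.2.2| with hδdef
  have hδ : 0 < δ := abs_pos.mpr (sub_ne_zero.mpr (hO2 z₀ (hKO hz₀K)))
  set τ : ℝ := max δ⁻¹ 1 with hτdef
  have hτ1 : (1:ℝ) ≤ τ := le_max_right _ _
  have hτ0 : (0:ℝ) < τ := lt_of_lt_of_le one_pos hτ1
  set α : ℝ := m - k - l with hαdef
  set p : ℕ := k + 2 + ⌈max α 0⌉₊ with hpdef
  have hkp : k ≤ p := by omega
  have hp2 : max α 0 + ((k:ℝ) - p) ≤ -2 := by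
    have h1 : max α 0 ≤ (⌈max α 0⌉₊ : ℝ) := Nat.le_ceil _
    have h2 : (p:ℝ) = (k:ℝ) + 2 + (⌈max α 0⌉₊ : ℝ) := by rw [hpdef]; push_cast; ring
    linarith
  -- constants from the symbol estimates
  have hCs : ∀ j : ℕ, ∃ C : ℝ, ∀ z ∈ K, ∀ ξ : ℝ × ℝ,
      ‖iteratedDeriv j (fun v : ℝ => iteratedDeriv l
          (fun u : ℝ => a z.1 z.2 (u, v)) ξ.1) ξ.2‖
        ≤ C * (1 + Real.sqrt (ξ.1 ^ 2 + ξ.2 ^ 2)) ^ (m - (l : ℝ) - (j : ℝ)) :=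
    fun j => hsym l j K hK
  choose Cf hCf using hCs
  set Cmax : ℝ := ∑ j ∈ Finset.range (p+1), max (Cf j) 0 with hCmaxdef
  have hCmax0 : 0 ≤ Cmax :=
    Finset.sum_nonneg fun j _ => le_max_right _ _
  have hCfle : ∀ j, j ≤ p → Cf j ≤ Cmax := by
    intro j hj
    calc Cf j ≤ max (Cf j) 0 := le_max_left _ _
      _ ≤ Cmax := Finset.single_le_sum (f := fun j => max (Cf j) 0)
          (fun i _ => le_max_right _ _) (Finset.mem_range.mpr (by omega))
  refine ⟨(p + 1) * τ ^ p * Cmax, ?_⟩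
  intro z hzK ξ₁
  set t : ℝ := z.1.2 - z.2.2 with htdef
  have ht : t ≠ 0 := sub_ne_zero.mpr (hO2 z (hKO hzK))
  have hδt : δ ≤ |t| := isMinOn_iff.mp hz₀min z hzK
  have htτ : |t|⁻¹ ≤ τ := by
    have : δ⁻¹ ≤ τ := le_max_left _ _
    have h2 : |t|⁻¹ ≤ δ⁻¹ := by
      apply inv_anti₀ hδ hδt
    linarith
  have htinv0 : 0 ≤ |t|⁻¹ := inv_nonneg.mpr (abs_nonneg t)
  set f : ℝ × ℝ → ℂ := a z.1 z.2 with hfdef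
  have hf : ContDiff ℝ (⊤:ℕ∞) f := (hsm z.1 z.2).of_le (by simp)
  set Mz : ℝ := M z.1 z.2 with hMzdef
  have hMz : 0 < Mz := hM z.1 z.2
  have hsupp_f : ∀ pt : ℝ × ℝ, Mz * |pt.1| < |pt.2| → f pt = 0 :=
    fun pt h => hsupp z.1 z.2 pt h
  rw [iteratedDeriv_param hf t hMz hsupp_f l ξ₁]
  set g : ℝ × ℝ → ℂ := pdu^[l] f with hgdef
  have hg : ContDiff ℝ (⊤:ℕ∞) g := contDiff_pdu_iter hf l
  have hgsupp : ∀ pt : ℝ × ℝ, Mz * |pt.1| < |pt.2| → g pt = 0 :=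
    pdu_iter_zero_on (cone_open Mz) hsupp_f l
  set b : ℝ → ℂ := fun v => g (ξ₁, v) with hbdef
  have hb : ContDiff ℝ (⊤:ℕ∞) b := hg.comp (by fun_prop)
  set R : ℝ := Mz * |ξ₁| + 1 with hRdef
  have hR0 : 0 < R := by positivity
  have hbR : ∀ v, R < v → b v = 0 := by
    intro v hv
    apply hgsupp (ξ₁, v)
    simp only
    rw [abs_of_pos (lt_trans hR0 hv)]
    have : Mz * |ξ₁| < R := by rw [hRdef]; linarith
    linarith
  -- identify iterated derivatives of b with mixed partials
  have hbj : ∀ j : ℕ, iteratedDeriv j b = fun y => pdv^[j] g (ξ₁, y) :=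
    fun j => iteratedDeriv_slice2 hg j ξ₁
  -- symbol bound for the mixed partials
  have hsym' : ∀ j : ℕ, ∀ y : ℝ, ‖pdv^[j] g (ξ₁, y)‖
      ≤ Cf j * (1 + Real.sqrt (ξ₁ ^ 2 + y ^ 2)) ^ (m - (l:ℝ) - (j:ℝ)) := by
    intro j y
    have h1 := hCf j z hzK (ξ₁, y)
    have h3 : (fun v : ℝ => iteratedDeriv l (fun u : ℝ => a z.1 z.2 (u, v)) ξ₁)
        = fun v => g (ξ₁, v) := by
      funext v
      rw [show (fun u : ℝ => a z.1 z.2 (u, v)) = fun u => f (u, v) from rfl]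
      rw [iteratedDeriv_slice1 hf l v]
    rw [h3] at h1
    have h4 : iteratedDeriv j (fun v => g (ξ₁, v)) y = pdv^[j] g (ξ₁, y) := by
      rw [iteratedDeriv_slice2 hg j ξ₁]
    rw [h4] at h1
    exact h1
  -- vanishing boundary terms
  have hvan' : ∀ j : ℕ, j < k → pdv^[j] g (ξ₁, 0) = 0 := by
    intro j hj
    have hcomm : pdv^[j] g = pdu^[l] (pdv^[j] f) := by
      rw [hgdef, ← pdu_iter_pdv_iter_comm hf l j]
    rw [hcomm]
    have hslice : (fun u : ℝ => pdv^[j] f (u, 0)) = fun _ => (0:ℂ) := by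
      funext u
      rw [show pdv^[j] f (u, 0) = iteratedDeriv j (fun v => f (u, v)) 0 by
        rw [iteratedDeriv_slice2 hf j u]]
      exact hvan z.1 z.2 u j hj
    have := iteratedDeriv_slice1 (contDiff_pdv_iter hf j) l 0
    rw [hslice, iteratedDeriv_zero_fun] at this
    have h0 : (fun x : ℝ => pdu^[l] (pdv^[j] f) (x, 0)) = fun _ => (0:ℂ) := this.symm
    exact congrFun h0 ξ₁
  -- helper positivity
  have hbase : (0:ℝ) < 1 + |ξ₁| := by positivity
  have hterm : (0:ℝ) ≤ (1 + |ξ₁|) ^ α := Real.rpow_nonneg hbase.le _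
  -- the main bound after integration by parts
  have main := ibp_bound ht hb hR0 hbR p
  -- bound the boundary terms
  have hbound_term : ∀ j ∈ Finset.range p,
      |t|⁻¹ ^ (j+1) * ‖iteratedDeriv j b 0‖ ≤ τ ^ p * (Cmax * (1 + |ξ₁|) ^ α) := by
    intro j hj
    rw [Finset.mem_range] at hj
    rcases lt_or_ge j k with hjk | hjk
    · have : iteratedDeriv j b 0 = 0 := by rw [hbj j]; exact hvan' j hjk
      rw [this, norm_zero, mul_zero]
      positivity
    · have h1 : ‖iteratedDeriv j b 0‖ ≤ Cf j * (1 + |ξ₁|) ^ (m - (l:ℝ) - (j:ℝ)) := by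
        rw [hbj j]
        have := hsym' j 0
        simpa [Real.sqrt_sq_eq_abs] using this
      have h2 : (1 + |ξ₁|) ^ (m - (l:ℝ) - (j:ℝ)) ≤ (1 + |ξ₁|) ^ α := by
        apply Real.rpow_le_rpow_of_exponent_le (by linarith [abs_nonneg ξ₁])
        rw [hαdef]
        have : (k:ℝ) ≤ (j:ℝ) := by exact_mod_cast hjk
        linarith
      have h3 : ‖iteratedDeriv j b 0‖ ≤ Cmax * (1 + |ξ₁|) ^ α := by
        calc ‖iteratedDeriv j b 0‖ ≤ Cf j * (1 + |ξ₁|) ^ (m - (l:ℝ) - (j:ℝ)) := h1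
          _ ≤ Cmax * (1 + |ξ₁|) ^ (m - (l:ℝ) - (j:ℝ)) := by
              apply mul_le_mul_of_nonneg_right (hCfle j (by omega)) (Real.rpow_nonneg hbase.le _)
          _ ≤ Cmax * (1 + |ξ₁|) ^ α := by
              apply mul_le_mul_of_nonneg_left h2 hCmax0
      have h4 : |t|⁻¹ ^ (j+1) ≤ τ ^ p := by
        calc |t|⁻¹ ^ (j+1) ≤ τ ^ (j+1) := pow_le_pow_left₀ htinv0 htτ _
          _ ≤ τ ^ p := pow_le_pow_right₀ hτ1 (by omega)
      exact mul_le_mul h4 h3 (norm_nonneg _) (by positivity)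
  -- bound the remaining integral
  have hint_bound : ‖∫ v in Ioi (0:ℝ),
      Complex.exp (Complex.I * (t:ℂ) * (v:ℂ)) * iteratedDeriv p b v‖
      ≤ Cmax * (1 + |ξ₁|) ^ α := by
    have hsupp_p : ∀ v, R < v → iteratedDeriv p b v = 0 :=
      iteratedDeriv_zero_of_support hbR p
    have hcont_p : Continuous (iteratedDeriv p b) := (contDiff_iteratedDeriv hb p).continuous
    have h1 : ‖∫ v in Ioi (0:ℝ), Complex.exp (Complex.I * (t:ℂ) * (v:ℂ)) * iteratedDeriv p b v‖
        ≤ ∫ v in Ioi (0:ℝ), ‖iteratedDeriv p b v‖ := by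
      calc ‖∫ v in Ioi (0:ℝ), Complex.exp (Complex.I * (t:ℂ) * (v:ℂ)) * iteratedDeriv p b v‖
          ≤ ∫ v in Ioi (0:ℝ), ‖Complex.exp (Complex.I * (t:ℂ) * (v:ℂ)) * iteratedDeriv p b v‖ :=
            norm_integral_le_integral_norm _
        _ = ∫ v in Ioi (0:ℝ), ‖iteratedDeriv p b v‖ := by
            congr 1
            funext v
            rw [norm_mul, norm_exp_I_mul, one_mul]
    have hsplit : ∫ v in Ioi (0:ℝ), ‖iteratedDeriv p b v‖
        = ∫ v in Ioc (0:ℝ) R, ‖iteratedDeriv p b v‖ := by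
      rw [show Ioi (0:ℝ) = Ioc 0 R ∪ Ioi R from (Set.Ioc_union_Ioi_eq_Ioi hR0.le).symm]
      rw [MeasureTheory.setIntegral_union (Set.Ioc_disjoint_Ioi le_rfl) measurableSet_Ioi
        (hcont_p.norm.integrableOn_Ioc)
        ((integrableOn_zero (ε' := ℝ)).congr_fun
          (fun v hv => by simp [hsupp_p v hv]) measurableSet_Ioi)]
      have : ∫ v in Ioi R, ‖iteratedDeriv p b v‖ = 0 := by
        have hEq : EqOn (fun v => ‖iteratedDeriv p b v‖) 0 (Ioi R) :=
          fun v hv => by simp [hsupp_p v hv]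
        rw [MeasureTheory.setIntegral_congr_fun measurableSet_Ioi hEq]
        simp
      rw [this, add_zero]
    have hptwise : ∀ v ∈ Ioc (0:ℝ) R, ‖iteratedDeriv p b v‖
        ≤ Cmax * (1 + |ξ₁|) ^ α * ((1+v)^2)⁻¹ := by
      intro v hv
      have hv0 : 0 ≤ v := le_of_lt hv.1
      have h2 : ‖iteratedDeriv p b v‖
          ≤ Cf p * (1 + Real.sqrt (ξ₁ ^ 2 + v ^ 2)) ^ (m - (l:ℝ) - (p:ℝ)) := by
        rw [hbj p]
        exact hsym' p v
      have h3 : (1 + Real.sqrt (ξ₁ ^ 2 + v ^ 2)) ^ (m - (l:ℝ) - (p:ℝ))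
          ≤ (1+|ξ₁|)^α * ((1+v)^2)⁻¹ := by
        apply weight_le ξ₁ v hv0
        · rw [hαdef]; push_cast; have : (k:ℝ) ≤ (p:ℝ) := by exact_mod_cast hkp
          linarith
        · have : m - (l:ℝ) - (p:ℝ) - α = (k:ℝ) - p := by rw [hαdef]; ring
          rw [this]; exact hp2
      calc ‖iteratedDeriv p b v‖
          ≤ Cf p * (1 + Real.sqrt (ξ₁ ^ 2 + v ^ 2)) ^ (m - (l:ℝ) - (p:ℝ)) := h2
        _ ≤ Cmax * (1 + Real.sqrt (ξ₁ ^ 2 + v ^ 2)) ^ (m - (l:ℝ) - (p:ℝ)) := by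
            apply mul_le_mul_of_nonneg_right (hCfle p le_rfl) (Real.rpow_nonneg (by positivity) _)
        _ ≤ Cmax * ((1+|ξ₁|)^α * ((1+v)^2)⁻¹) := mul_le_mul_of_nonneg_left h3 hCmax0
        _ = Cmax * (1 + |ξ₁|) ^ α * ((1+v)^2)⁻¹ := by ring
    have hint_rhs : IntegrableOn (fun v => Cmax * (1 + |ξ₁|) ^ α * ((1+v)^2)⁻¹)
        (Ioc (0:ℝ) R) := by
      apply (ContinuousOn.integrableOn_Icc ?_).mono_set Ioc_subset_Icc_self
      apply ContinuousOn.mul continuousOn_const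
      apply ContinuousOn.inv₀ (by fun_prop)
      intro v hv
      rw [mem_Icc] at hv
      have : (0:ℝ) < 1 + v := by linarith [hv.1]
      positivity
    have hmono : ∫ v in Ioc (0:ℝ) R, ‖iteratedDeriv p b v‖
        ≤ ∫ v in Ioc (0:ℝ) R, Cmax * (1 + |ξ₁|) ^ α * ((1+v)^2)⁻¹ :=
      MeasureTheory.setIntegral_mono_on (hcont_p.norm.integrableOn_Ioc) hint_rhs
        measurableSet_Ioc hptwise
    have hfinal : ∫ v in Ioc (0:ℝ) R, Cmax * (1 + |ξ₁|) ^ α * ((1+v)^2)⁻¹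
        ≤ Cmax * (1 + |ξ₁|) ^ α := by
      rw [MeasureTheory.integral_const_mul]
      calc Cmax * (1 + |ξ₁|) ^ α * ∫ v in Ioc (0:ℝ) R, ((1+v)^2)⁻¹
          ≤ Cmax * (1 + |ξ₁|) ^ α * 1 := by
            apply mul_le_mul_of_nonneg_left (integral_Ioc_inv_sq_le R hR0.le) (by positivity)
        _ = Cmax * (1 + |ξ₁|) ^ α := mul_one _
    calc ‖∫ v in Ioi (0:ℝ), Complex.exp (Complex.I * (t:ℂ) * (v:ℂ)) * iteratedDeriv p b v‖
        ≤ ∫ v in Ioi (0:ℝ), ‖iteratedDeriv p b v‖ := h1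
      _ = ∫ v in Ioc (0:ℝ) R, ‖iteratedDeriv p b v‖ := hsplit
      _ ≤ ∫ v in Ioc (0:ℝ) R, Cmax * (1 + |ξ₁|) ^ α * ((1+v)^2)⁻¹ := hmono
      _ ≤ Cmax * (1 + |ξ₁|) ^ α := hfinal
  -- assemble everything
  have hsum : (∑ j ∈ Finset.range p, |t|⁻¹ ^ (j+1) * ‖iteratedDeriv j b 0‖)
      ≤ (p : ℝ) * (τ ^ p * (Cmax * (1 + |ξ₁|) ^ α)) := by
    calc (∑ j ∈ Finset.range p, |t|⁻¹ ^ (j+1) * ‖iteratedDeriv j b 0‖)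
        ≤ ∑ _j ∈ Finset.range p, τ ^ p * (Cmax * (1 + |ξ₁|) ^ α) :=
          Finset.sum_le_sum hbound_term
      _ = (p : ℝ) * (τ ^ p * (Cmax * (1 + |ξ₁|) ^ α)) := by
          rw [Finset.sum_const, Finset.card_range, nsmul_eq_mul]
  have hlast : |t|⁻¹ ^ p * ‖∫ v in Ioi (0:ℝ),
      Complex.exp (Complex.I * (t:ℂ) * (v:ℂ)) * iteratedDeriv p b v‖
      ≤ τ ^ p * (Cmax * (1 + |ξ₁|) ^ α) := by
    apply mul_le_mul (pow_le_pow_left₀ htinv0 htτ p) hint_bound (norm_nonneg _) (by positivity)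
  calc ‖∫ v in Ioi (0:ℝ), Complex.exp (Complex.I * (t:ℂ) * (v:ℂ)) * g (ξ₁, v)‖
      ≤ (∑ j ∈ Finset.range p, |t|⁻¹ ^ (j+1) * ‖iteratedDeriv j b 0‖)
        + |t|⁻¹ ^ p * ‖∫ v in Ioi (0:ℝ),
            Complex.exp (Complex.I * (t:ℂ) * (v:ℂ)) * iteratedDeriv p b v‖ := main
    _ ≤ (p : ℝ) * (τ ^ p * (Cmax * (1 + |ξ₁|) ^ α)) + τ ^ p * (Cmax * (1 + |ξ₁|) ^ α) :=
        add_le_add hsum hlast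
    _ = (↑p + 1) * τ ^ p * Cmax * (1 + |ξ₁|) ^ α := by ring
    _ = (↑p + 1) * τ ^ p * Cmax * (1 + |ξ₁|) ^ (m - (k:ℝ) - (l:ℝ)) := by rw [hαdef]
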